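/- The series ∑_{p prime} (log p)/(p(p+1)) converges and equals 1/2 + log 2 + ∫_1^∞ E(t)·(2t + 1)/(t² + t)² dt, where the integral converges absolutely. -/

import Mathlib

open Real MeasureTheory Set Filter Topology

/-- Chebyshev theta function: `θ(t) = ∑_{p ≤ t, p prime} log p`. -/
noncomputable def chebTheta (t : ℝ) : ℝ :=
  ∑ p ∈ (Finset.range (Nat.floor t + 1)).filter Nat.Prime, Real.log p

/-- Error term in the Prime Number Theorem: `E(t) = θ(t) − t`. -/
noncomputable def chebE (t : ℝ) : ℝ := chebTheta t - t

/-! ### Auxiliary lemmas -/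

lemma wderiv {t : ℝ} (ht : 0 < t) :
    HasDerivAt (fun s : ℝ => -(s ^ 2 + s)⁻¹) ((2 * t + 1) / (t ^ 2 + t) ^ 2) t := by
  have h1 : HasDerivAt (fun s : ℝ => s ^ 2 + s) (2 * t + 1) t := by
    exact ((hasDerivAt_pow 2 t).add (hasDerivAt_id' t)).congr_deriv (by norm_num)
  have hne : t ^ 2 + t ≠ 0 := by positivity
  have := (h1.inv hne).neg
  refine this.congr_deriv ?_
  ring

lemma tendsto_G : Tendsto (fun t : ℝ => -(t ^ 2 + t)⁻¹) atTop (𝓝 0) := by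
  have h : Tendsto (fun t : ℝ => t ^ 2 + t) atTop atTop :=
    Tendsto.atTop_add_atTop (tendsto_pow_atTop (by norm_num)) tendsto_id
  rw [show (0 : ℝ) = -0 by norm_num]
  exact h.inv_tendsto_atTop.neg

lemma w_nonneg {x t : ℝ} (hx : 0 < x) (ht : t ∈ Ioi x) :
    0 ≤ (2 * t + 1) / (t ^ 2 + t) ^ 2 := by
  have : 0 < t := lt_trans hx ht
  positivity

lemma integral_w {x : ℝ} (hx : 0 < x) :
    ∫ t in Ioi x, (2 * t + 1) / (t ^ 2 + t) ^ 2 = (x ^ 2 + x)⁻¹ := by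
  have := integral_Ioi_of_hasDerivAt_of_nonneg' (g := fun s : ℝ => -(s ^ 2 + s)⁻¹)
    (g' := fun t : ℝ => (2 * t + 1) / (t ^ 2 + t) ^ 2)
    (fun t ht => wderiv (lt_of_lt_of_le hx ht)) (fun t ht => w_nonneg hx ht) tendsto_G
  rw [this]
  ring

lemma integrableOn_w {x : ℝ} (hx : 0 < x) :
    IntegrableOn (fun t : ℝ => (2 * t + 1) / (t ^ 2 + t) ^ 2) (Ioi x) :=
  integrableOn_Ioi_deriv_of_nonneg' (fun t ht => wderiv (lt_of_lt_of_le hx ht))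
    (fun t ht => w_nonneg hx ht) tendsto_G

lemma twderiv {t : ℝ} (ht : 0 < t) :
    HasDerivAt (fun s : ℝ => Real.log (s / (s + 1)) - (s + 1)⁻¹)
      (t * ((2 * t + 1) / (t ^ 2 + t) ^ 2)) t := by
  have h1 : t + 1 ≠ 0 := by positivity
  have hdiv : HasDerivAt (fun s : ℝ => s / (s + 1))
      ((1 * (t + 1) - t * 1) / (t + 1) ^ 2) t :=
    (hasDerivAt_id t).div ((hasDerivAt_id t).add_const 1) h1
  have hne : t / (t + 1) ≠ 0 := by positivity
  have hlog := hdiv.log hne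
  have hinv : HasDerivAt (fun s : ℝ => (s + 1)⁻¹) (-1 / (t + 1) ^ 2) t := by
    exact (((hasDerivAt_id' t).add_const 1).inv h1).congr_deriv (by ring)
  have := hlog.sub hinv
  refine this.congr_deriv ?_
  have ht' : t ≠ 0 := ne_of_gt ht
  field_simp
  ring

lemma tendsto_tw : Tendsto (fun t : ℝ => Real.log (t / (t + 1)) - (t + 1)⁻¹) atTop (𝓝 0) := by
  have h1 : Tendsto (fun t : ℝ => (t + 1)⁻¹) atTop (𝓝 0) :=
    (tendsto_atTop_add_const_right _ 1 tendsto_id).inv_tendsto_atTop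
  have h2 : Tendsto (fun t : ℝ => t / (t + 1)) atTop (𝓝 1) := by
    have h3 : Tendsto (fun t : ℝ => 1 - (t + 1)⁻¹) atTop (𝓝 (1 - 0)) :=
      tendsto_const_nhds.sub h1
    rw [sub_zero] at h3
    apply h3.congr'
    filter_upwards [eventually_gt_atTop (0 : ℝ)] with t ht
    have : t + 1 ≠ 0 := by positivity
    field_simp
    ring
  have h3 : Tendsto (fun t : ℝ => Real.log (t / (t + 1))) atTop (𝓝 0) := by
    have := (Real.continuousAt_log (one_ne_zero)).tendsto.comp h2
    simpa [Function.comp_def] using this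
  simpa using h3.sub h1

lemma tw_nonneg {t : ℝ} (ht : t ∈ Ioi (1 : ℝ)) :
    0 ≤ t * ((2 * t + 1) / (t ^ 2 + t) ^ 2) := by
  have : (0 : ℝ) < t := lt_trans one_pos ht
  positivity

lemma integral_tw :
    ∫ t in Ioi (1 : ℝ), t * ((2 * t + 1) / (t ^ 2 + t) ^ 2) = 1 / 2 + Real.log 2 := by
  have h0 := integral_Ioi_of_hasDerivAt_of_nonneg'
    (g := fun s : ℝ => Real.log (s / (s + 1)) - (s + 1)⁻¹)
    (g' := fun t : ℝ => t * ((2 * t + 1) / (t ^ 2 + t) ^ 2))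
    (fun t ht => twderiv (lt_of_lt_of_le one_pos ht)) (fun t ht => tw_nonneg ht) tendsto_tw
  rw [h0]
  show 0 - (Real.log ((1 : ℝ) / (1 + 1)) - ((1 : ℝ) + 1)⁻¹) = 1 / 2 + Real.log 2
  have h2 : Real.log ((1 : ℝ) / (1 + 1)) = -Real.log 2 := by
    rw [show ((1 : ℝ) / (1 + 1)) = (2 : ℝ)⁻¹ by norm_num, Real.log_inv]
  rw [h2]
  norm_num

lemma integrable_tw : IntegrableOn (fun t : ℝ => t * ((2 * t + 1) / (t ^ 2 + t) ^ 2)) (Ioi 1) :=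
  integrableOn_Ioi_deriv_of_nonneg'
    (fun t ht => twderiv (lt_of_lt_of_le one_pos ht)) (fun t ht => tw_nonneg ht) tendsto_tw

lemma chebTheta_nonneg (t : ℝ) : 0 ≤ chebTheta t := by
  apply Finset.sum_nonneg
  intro p hp
  have hp' : p.Prime := (Finset.mem_filter.1 hp).2
  apply Real.log_nonneg
  exact_mod_cast hp'.one_lt.le

lemma chebTheta_le {t : ℝ} (ht : 0 ≤ t) : chebTheta t ≤ t * Real.log 4 := by
  have h1 : chebTheta t = Real.log (primorial (Nat.floor t)) := by
    rw [chebTheta, primorial]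
    push_cast
    rw [Real.log_prod]
    intro p hp
    have : p.Prime := (Finset.mem_filter.1 hp).2
    exact_mod_cast this.pos.ne'
  rw [h1]
  calc Real.log (primorial (Nat.floor t)) ≤ Real.log ((4 : ℕ) ^ (Nat.floor t)) := by
        apply Real.log_le_log (by exact_mod_cast primorial_pos _)
        exact_mod_cast primorial_le_4_pow _
    _ = (Nat.floor t : ℝ) * Real.log 4 := by
        push_cast
        rw [Real.log_pow]
    _ ≤ t * Real.log 4 := by
        apply mul_le_mul_of_nonneg_right (Nat.floor_le ht)
        exact Real.log_nonneg (by norm_num)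

lemma chebTheta_measurable : Measurable chebTheta := by
  have : chebTheta = (fun n : ℕ =>
      ∑ p ∈ (Finset.range (n + 1)).filter Nat.Prime, Real.log p) ∘ Nat.floor := rfl
  rw [this]
  exact measurable_from_nat.comp Nat.measurable_floor

lemma summable_f : Summable (fun p : ℕ => if Nat.Prime p then
    Real.log p / ((p : ℝ) * ((p : ℝ) + 1)) else 0) := by
  have hs : Summable (fun p : ℕ => 2 * (p : ℝ) ^ (-3/2 : ℝ)) :=
    (Real.summable_nat_rpow.mpr (by norm_num)).mul_left 2
  apply Summable.of_nonneg_of_le _ _ hs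
  · intro p
    split
    · next hp =>
      have h0 : (0 : ℝ) < p := by exact_mod_cast hp.pos
      apply div_nonneg (Real.log_nonneg (by exact_mod_cast hp.one_lt.le))
      positivity
    · exact le_refl 0
  · intro p
    split
    · next hp =>
      have h0 : (0 : ℝ) < p := by exact_mod_cast hp.pos
      have hp1 : (1 : ℝ) ≤ p := by exact_mod_cast hp.one_lt.le
      have key : (p : ℝ) ^ (-3/2 : ℝ) = (p : ℝ) ^ (1/2 : ℝ) / (p : ℝ) ^ (2 : ℝ) := by
        rw [← Real.rpow_sub h0]; norm_num
      have hp2 : (p : ℝ) ^ (2 : ℝ) = (p : ℝ) * (p : ℝ) := by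
        rw [show (2 : ℝ) = ((2 : ℕ) : ℝ) by norm_num, Real.rpow_natCast]; ring
      calc Real.log p / ((p : ℝ) * ((p : ℝ) + 1))
          ≤ ((p : ℝ) ^ (1/2 : ℝ) * 2) / ((p : ℝ) ^ (2 : ℝ)) := by
            apply div_le_div₀ (by positivity) _ (by positivity) _
            · calc Real.log p ≤ (p : ℝ) ^ (1/2 : ℝ) / (1/2) :=
                    Real.log_le_rpow_div (Nat.cast_nonneg p) (by norm_num)
                _ = (p : ℝ) ^ (1/2 : ℝ) * 2 := by ring
            · rw [hp2]; nlinarith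
        _ = 2 * (p : ℝ) ^ (-3/2 : ℝ) := by rw [key]; ring
    · positivity

lemma integrableOn_thetaw :
    IntegrableOn (fun t : ℝ => chebTheta t * ((2 * t + 1) / (t ^ 2 + t) ^ 2)) (Ioi 1) := by
  have hmeas : AEStronglyMeasurable
      (fun t : ℝ => chebTheta t * ((2 * t + 1) / (t ^ 2 + t) ^ 2))
      (volume.restrict (Ioi 1)) := by
    apply Measurable.aestronglyMeasurable
    apply chebTheta_measurable.mul
    apply Measurable.div
    · exact (measurable_id.const_mul 2).add_const 1
    · exact ((measurable_id.pow_const 2).add measurable_id).pow_const 2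
  apply Integrable.mono (integrable_tw.const_mul (Real.log 4)) hmeas
  rw [ae_restrict_iff' measurableSet_Ioi]
  filter_upwards with t ht
  have ht1 : (1 : ℝ) < t := ht
  have ht0 : (0 : ℝ) < t := lt_trans one_pos ht1
  have hw : 0 ≤ (2 * t + 1) / (t ^ 2 + t) ^ 2 := by positivity
  rw [Real.norm_of_nonneg (mul_nonneg (chebTheta_nonneg t) hw)]
  calc chebTheta t * ((2 * t + 1) / (t ^ 2 + t) ^ 2)
      ≤ (t * Real.log 4) * ((2 * t + 1) / (t ^ 2 + t) ^ 2) :=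
        mul_le_mul_of_nonneg_right (chebTheta_le ht0.le) hw
    _ = Real.log 4 * (t * ((2 * t + 1) / (t ^ 2 + t) ^ 2)) := by ring
    _ ≤ ‖Real.log 4 * (t * ((2 * t + 1) / (t ^ 2 + t) ^ 2))‖ := le_abs_self _

lemma integrableOn_E :
    IntegrableOn (fun t : ℝ => chebE t * (2 * t + 1) / (t ^ 2 + t) ^ 2) (Ioi 1) := by
  have heq : (fun t : ℝ => chebE t * (2 * t + 1) / (t ^ 2 + t) ^ 2)
      = fun t : ℝ => chebTheta t * ((2 * t + 1) / (t ^ 2 + t) ^ 2)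
        - t * ((2 * t + 1) / (t ^ 2 + t) ^ 2) := by
    funext t; simp only [chebE]; ring
  rw [heq]
  exact integrableOn_thetaw.sub integrable_tw

/-- The summand spread out as an indicator function on `(1, ∞)`. -/
noncomputable def FF (p : ℕ) (t : ℝ) : ℝ :=
  Set.indicator (Ici (p : ℝ))
    (fun s => (if Nat.Prime p then Real.log p else 0) * ((2 * s + 1) / (s ^ 2 + s) ^ 2)) t

lemma FF_nonneg (p : ℕ) (t : ℝ) : 0 ≤ FF p t := by
  rw [FF]
  by_cases hmem : t ∈ Ici (p : ℝ)
  · rw [Set.indicator_of_mem hmem]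
    by_cases hp : Nat.Prime p
    · rw [if_pos hp]
      have hp1 : (1 : ℝ) ≤ p := by exact_mod_cast hp.one_lt.le
      have ht : (0 : ℝ) < t := lt_of_lt_of_le one_pos (hp1.trans hmem)
      have := Real.log_nonneg hp1
      positivity
    · rw [if_neg hp]; simp
  · rw [Set.indicator_of_notMem hmem]

lemma FF_zero_of_not_prime {p : ℕ} (hp : ¬ Nat.Prime p) : FF p = fun _ => 0 := by
  funext t; rw [FF]; simp [hp]

lemma FF_int (p : ℕ) : IntegrableOn (FF p) (Ioi 1) := by
  by_cases hp : Nat.Prime p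
  · have hFe : FF p = Set.indicator (Ici (p : ℝ))
        (fun s => Real.log p * ((2 * s + 1) / (s ^ 2 + s) ^ 2)) := by
      funext t; rw [FF, if_pos hp]
    rw [hFe]
    unfold IntegrableOn
    rw [integrable_indicator_iff measurableSet_Ici]
    unfold IntegrableOn
    rw [Measure.restrict_restrict measurableSet_Ici]
    have hsub : Ici (p : ℝ) ∩ Ioi 1 = Ici (p : ℝ) := by
      apply Set.inter_eq_self_of_subset_left
      intro x hx
      have : (2 : ℝ) ≤ p := by exact_mod_cast hp.two_le
      exact lt_of_lt_of_le (by linarith : (1 : ℝ) < p) hx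
    rw [hsub]
    have hpp : (0 : ℝ) < p := by exact_mod_cast hp.pos
    show IntegrableOn _ (Ici (p : ℝ)) volume
    rw [integrableOn_Ici_iff_integrableOn_Ioi]
    exact (integrableOn_w hpp).const_mul (Real.log p)
  · rw [FF_zero_of_not_prime hp]
    exact integrableOn_zero

lemma FF_val (p : ℕ) : ∫ t in Ioi (1 : ℝ), FF p t
    = (if Nat.Prime p then Real.log p / ((p : ℝ) * ((p : ℝ) + 1)) else 0) := by
  by_cases hp : Nat.Prime p
  · have hFe : ∀ t, FF p t = Set.indicator (Ici (p : ℝ))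
        (fun s => Real.log p * ((2 * s + 1) / (s ^ 2 + s) ^ 2)) t := by
      intro t; rw [FF, if_pos hp]
    simp only [hFe]
    rw [setIntegral_indicator measurableSet_Ici]
    have hsub : Ioi 1 ∩ Ici (p : ℝ) = Ici (p : ℝ) := by
      apply Set.inter_eq_self_of_subset_right
      intro x hx
      have : (2 : ℝ) ≤ p := by exact_mod_cast hp.two_le
      exact lt_of_lt_of_le (by linarith : (1 : ℝ) < p) hx
    have hpp : (0 : ℝ) < p := by exact_mod_cast hp.pos
    rw [hsub, integral_Ici_eq_integral_Ioi, integral_const_mul, integral_w hpp, if_pos hp,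
      show ((p : ℝ) ^ 2 + p) = (p : ℝ) * ((p : ℝ) + 1) by ring, ← div_eq_mul_inv]
  · rw [if_neg hp, FF_zero_of_not_prime hp]
    simp

lemma FF_key {t : ℝ} (ht : t ∈ Ioi (1 : ℝ)) :
    (∑' p, FF p t) = chebTheta t * ((2 * t + 1) / (t ^ 2 + t) ^ 2) := by
  have ht1 : (1 : ℝ) < t := ht
  have ht0 : (0 : ℝ) ≤ t := by linarith
  rw [tsum_eq_sum (s := (Finset.range (Nat.floor t + 1)).filter Nat.Prime)
    (by
      intro p hps
      by_cases hp : Nat.Prime p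
      · have hpr : p ∉ Finset.range (Nat.floor t + 1) := fun h =>
          hps (Finset.mem_filter.2 ⟨h, hp⟩)
        have hlt : Nat.floor t < p := by
          by_contra hcon
          exact hpr (Finset.mem_range.2 (Nat.lt_succ_of_le (not_lt.1 hcon)))
        have htp : t < p := (Nat.floor_lt ht0).1 hlt
        rw [FF]
        exact Set.indicator_of_notMem (by simpa using htp.not_ge) _
      · rw [FF_zero_of_not_prime hp])]
  rw [chebTheta, Finset.sum_mul]
  apply Finset.sum_congr rfl
  intro p hp
  obtain ⟨hpr, hprime⟩ := Finset.mem_filter.1 hp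
  have hple : (p : ℝ) ≤ t := by
    have hpf : p ≤ Nat.floor t := Nat.lt_succ_iff.1 (Finset.mem_range.1 hpr)
    calc (p : ℝ) ≤ (Nat.floor t : ℝ) := by exact_mod_cast hpf
      _ ≤ t := Nat.floor_le ht0
  rw [FF, Set.indicator_of_mem (mem_Ici.2 hple), if_pos hprime]

theorem stmt13 :
    Summable (fun p : ℕ => if Nat.Prime p then
        Real.log p / ((p:ℝ) * ((p:ℝ) + 1)) else 0) ∧
    IntegrableOn (fun t : ℝ => chebE t * (2*t + 1) / (t^2 + t)^2) (Set.Ioi 1) ∧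
    (∑' p : ℕ, if Nat.Prime p then Real.log p / ((p:ℝ) * ((p:ℝ) + 1)) else 0)
      = 1/2 + Real.log 2
        + ∫ t in Set.Ioi (1:ℝ), chebE t * (2*t + 1) / (t^2 + t)^2 := by
  refine ⟨summable_f, integrableOn_E, ?_⟩
  calc (∑' p : ℕ, if Nat.Prime p then Real.log p / ((p:ℝ) * ((p:ℝ) + 1)) else 0)
      = ∑' p, ∫ t in Ioi (1 : ℝ), FF p t := by
        apply tsum_congr; intro p; rw [FF_val]
    _ = ∫ t in Ioi (1 : ℝ), ∑' p, FF p t := by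
        apply integral_tsum_of_summable_integral_norm FF_int
        apply Summable.congr summable_f
        intro p
        rw [← FF_val p]
        apply setIntegral_congr_fun measurableSet_Ioi
        intro t _
        exact (Real.norm_of_nonneg (FF_nonneg p t)).symm
    _ = ∫ t in Ioi (1 : ℝ), chebTheta t * ((2 * t + 1) / (t ^ 2 + t) ^ 2) :=
        setIntegral_congr_fun measurableSet_Ioi (fun t ht => FF_key ht)
    _ = ∫ t in Ioi (1 : ℝ), (t * ((2 * t + 1) / (t ^ 2 + t) ^ 2)
          + chebE t * (2 * t + 1) / (t ^ 2 + t) ^ 2) := by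
        apply setIntegral_congr_fun measurableSet_Ioi
        intro t _
        simp only [chebE]
        ring
    _ = (∫ t in Ioi (1 : ℝ), t * ((2 * t + 1) / (t ^ 2 + t) ^ 2))
          + ∫ t in Ioi (1 : ℝ), chebE t * (2 * t + 1) / (t ^ 2 + t) ^ 2 :=
        integral_add integrable_tw integrableOn_E
    _ = 1/2 + Real.log 2 + ∫ t in Set.Ioi (1:ℝ), chebE t * (2*t + 1) / (t^2 + t)^2 := by
        rw [integral_tw]
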